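/- Let A ∈ ℂ^{n×n} and let T ∈ ℂ^{n×n} be a nonsingular upper triangular matrix. Then the staircase sequences of AT and of A coincide: m_j(AT) = m_j(A) for every 1 ≤ j ≤ n. -/

import Mathlib

open Matrix

/-- The entry `A_{ij}` of a matrix in 1-based indexing (zero outside the index range). -/
def entry1 {n : ℕ} (A : Matrix (Fin n) (Fin n) ℂ) (i j : ℕ) : ℂ :=
  if h : 1 ≤ i ∧ i ≤ n ∧ 1 ≤ j ∧ j ≤ n then A ⟨i - 1, by omega⟩ ⟨j - 1, by omega⟩ else 0

open Classical in
/-- The (lower) staircase sequence `m_j(A)` of a matrix, with `m_0(A) = 0` and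
`m_j(A) = max (m_{j-1}(A)) (max {i : i > j and A_{ij} ≠ 0})` (1-based indices). -/
noncomputable def staircase {n : ℕ} (A : Matrix (Fin n) (Fin n) ℂ) : ℕ → ℕ
  | 0 => 0
  | j + 1 =>
    max (staircase A j)
      ((Finset.range (n + 1)).sup fun i =>
        if j + 1 < i ∧ entry1 A i (j + 1) ≠ 0 then i else 0)

/-! `staircase A j ≤ m` says exactly that the block of `A` in rows `> m` and columns `≤ j`
vanishes below the diagonal. A right factor `B` that is upper triangular only mixes each
column of `A` with earlier columns, so it cannot create nonzero entries in such a block;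
applying this to `T` and to the (again upper triangular) `T⁻¹` gives both inequalities. -/

namespace Matrix

variable {n : ℕ}

lemma bounds_of_entry1_ne_zero {A : Matrix (Fin n) (Fin n) ℂ} {i j : ℕ}
    (h : entry1 A i j ≠ 0) : 1 ≤ i ∧ i ≤ n ∧ 1 ≤ j ∧ j ≤ n := by
  by_contra hc
  simp [entry1, hc] at h

lemma staircase_monotone (A : Matrix (Fin n) (Fin n) ℂ) : Monotone (staircase A) :=
  monotone_nat_of_le_succ fun _ => le_max_left _ _

lemma le_staircase_of_entry1_ne_zero (A : Matrix (Fin n) (Fin n) ℂ) {i k : ℕ} (hki : k < i)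
    (h : entry1 A i k ≠ 0) : i ≤ staircase A k := by
  obtain ⟨-, hin, hk, -⟩ := bounds_of_entry1_ne_zero h
  obtain ⟨k, rfl⟩ : ∃ k', k = k' + 1 := ⟨k - 1, by omega⟩
  rw [staircase]
  refine le_max_of_le_right (Finset.le_sup_of_le (Finset.mem_range.2 (show i < n + 1 by omega)) ?_)
  rw [if_pos ⟨hki, h⟩]

theorem staircase_le_iff (A : Matrix (Fin n) (Fin n) ℂ) (j m : ℕ) :
    staircase A j ≤ m ↔ ∀ i k, k ≤ j → k < i → m < i → entry1 A i k = 0 := by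
  constructor
  · intro hj i k hkj hki hmi
    by_contra h
    have := (le_staircase_of_entry1_ne_zero A hki h).trans (staircase_monotone A hkj)
    omega
  · intro h
    induction j with
    | zero => exact Nat.zero_le m
    | succ j ih =>
      refine max_le (ih fun i k hkj => h i k (by omega)) (Finset.sup_le fun i _ => ?_)
      split_ifs with hi
      · by_contra! hmi
        exact hi.2 (h i (j + 1) le_rfl hi.1 hmi)
      · exact Nat.zero_le m

theorem staircase_mul_le (A : Matrix (Fin n) (Fin n) ℂ) {B : Matrix (Fin n) (Fin n) ℂ}
    (hB : B.BlockTriangular id) (j : ℕ) : staircase (A * B) j ≤ staircase A j := by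
  have hA := (staircase_le_iff A j _).1 le_rfl
  refine (staircase_le_iff (A * B) j _).2 fun i k hkj hki hmi => ?_
  by_cases hb : 1 ≤ i ∧ i ≤ n ∧ 1 ≤ k ∧ k ≤ n
  swap
  · simp [entry1, hb]
  rw [entry1, dif_pos hb, mul_apply]
  refine Finset.sum_eq_zero fun l _ => ?_
  rcases lt_or_ge (k - 1) (l : ℕ) with hlk | hlk
  · rw [hB (show (⟨k - 1, by omega⟩ : Fin n) < l from hlk), mul_zero]
  · have hAl := hA i (l + 1) (by omega) (by omega) hmi
    rw [entry1, dif_pos ⟨hb.1, hb.2.1, by omega, by omega⟩] at hAl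
    simp only [Nat.add_sub_cancel, Fin.eta] at hAl
    rw [hAl, zero_mul]

end Matrix

theorem staircase_triangular_mul_right {n : ℕ} (A T : Matrix (Fin n) (Fin n) ℂ)
    (hTtri : ∀ i j : Fin n, (j : ℕ) < (i : ℕ) → T i j = 0)
    (hTinv : IsUnit T.det) :
    ∀ j : ℕ, 1 ≤ j → j ≤ n → staircase (A * T) j = staircase A j := by
  intro j _ _
  have hT : T.BlockTriangular id := fun i j h => hTtri i j h
  have := invertibleOfIsUnitDet T hTinv
  refine le_antisymm (staircase_mul_le A hT j) ?_
  calc staircase A j = staircase (A * T * T⁻¹) j := by rw [mul_inv_cancel_right_of_invertible]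
    _ ≤ staircase (A * T) j := staircase_mul_le _ (blockTriangular_inv_of_blockTriangular hT) j
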